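/- Let F be a field, A an n×n matrix over F, p, s, τ natural numbers, λ_1,…,λ_p pairwise distinct nonzero elements of F, and M_{j,i} (1 ≤ j ≤ p, 0 ≤ i < s) n×n matrices over F. Define G(k) := ∑_{j=1}^{p} λ_j^k · ∑_{i=0}^{s−1} C(k,i)·M_{j,i}, and suppose A^k = G(k) for every k ≥ τ. Let t be the least natural number with A^t = G(t) (it exists, since A^τ = G(τ)). Then: (a) A^k = G(k) for every k ≥ t; and (b) t is the least natural number m such that the kernel of the linear map x ↦ A^m·x equals the kernel of x ↦ A^{m+1}·x (i.e., t is the index of A). -/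

import Mathlib

/-!
Let `q = ∏ⱼ (X - λⱼ)^s` and let `S` be the shift `f ↦ (k ↦ f (k + 1))` on sequences. Every
purely geometric sequence `G` satisfies `q(S) G = 0`, and `q(0) ≠ 0` as the `λⱼ` are nonzero,
so this recurrence can be run backwards: a sequence it annihilates from `B` on and which
vanishes eventually vanishes from `B` on.

Applying `q(S)` to `D k = A^k - G k` gives `A^k q(A)`. This vanishes at `k = τ`, and once
`ker A^m = ker A^(m+1)` the kernels of all higher powers equal `ker A^m`, so `A^m q(A) = 0`; hence
`D` is annihilated from `m` on and vanishes from `m` on. Conversely, if `A^t = G t` and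
`A^(t+1) x = 0`, then `G k x` vanishes for large `k`, hence for all `k`, and `A^t x = G t x = 0`.
So `ker A^t = ker A^(t+1)`, and both claims follow from the minimality of `t`.
-/

open Finset Polynomial

section SeqShift

variable {R V W : Type*} [CommRing R] [AddCommGroup V] [Module R V] [AddCommGroup W] [Module R W]

variable (R V) in
def seqShift : Module.End R (ℕ → V) :=
  LinearMap.funLeft R V (· + 1)

theorem seqShift_pow_apply (i : ℕ) (f : ℕ → V) (k : ℕ) :
    (seqShift R V ^ i) f k = f (k + i) := by
  induction i generalizing f with
  | zero => rfl
  | succ i ih => rw [pow_succ, Module.End.mul_apply, ih]; rfl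

theorem aeval_seqShift_apply (q : R[X]) (f : ℕ → V) (k : ℕ) :
    aeval (seqShift R V) q f k = ∑ i ∈ range (q.natDegree + 1), q.coeff i • f (k + i) := by
  simp only [aeval_eq_sum_range, LinearMap.sum_apply, Finset.sum_apply, LinearMap.smul_apply,
    Pi.smul_apply, seqShift_pow_apply]

theorem aeval_seqShift_comp (φ : V →ₗ[R] W) (q : R[X]) (f : ℕ → V) :
    aeval (seqShift R W) q (φ ∘ f) = φ ∘ aeval (seqShift R V) q f := by
  ext k : 1
  simp only [Function.comp_apply, aeval_seqShift_apply, map_sum, map_smul]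

theorem aeval_seqShift_eq_zero_of_dvd {p q : R[X]} (hpq : p ∣ q) {f : ℕ → V}
    (hf : aeval (seqShift R V) p f = 0) : aeval (seqShift R V) q f = 0 := by
  obtain ⟨r, rfl⟩ := hpq
  rw [mul_comm, map_mul, Module.End.mul_apply, hf, map_zero]

theorem aeval_seqShift_pow {A : Type*} [Ring A] [Algebra R A] (a : A) (q : R[X]) :
    aeval (seqShift R A) q (a ^ ·) = fun k => a ^ k * aeval a q := by
  ext k : 1
  simp only [aeval_seqShift_apply, aeval_eq_sum_range a, Finset.mul_sum, mul_smul_comm, pow_add]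

theorem aeval_seqShift_apply_eq_zero {f : ℕ → V} {K : ℕ} (hf : ∀ k, K ≤ k → f k = 0) (q : R[X])
    {k : ℕ} (hk : K ≤ k) : aeval (seqShift R V) q f k = 0 := by
  rw [aeval_seqShift_apply]
  exact sum_eq_zero fun i _ => by rw [hf (k + i) (by omega), smul_zero]

theorem eq_zero_of_aeval_seqShift_apply_eq_zero {q : R[X]} (hq : IsUnit (q.coeff 0))
    {f : ℕ → V} {B K : ℕ} (hrec : ∀ k, B ≤ k → aeval (seqShift R V) q f k = 0)
    (hvan : ∀ k, K ≤ k → f k = 0) : ∀ k, B ≤ k → f k = 0 := by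
  suffices h : ∀ j k, B ≤ k → K ≤ k + j → f k = 0 from fun k hk => h K k hk (by omega)
  intro j
  induction j with
  | zero => exact fun k _ hK => hvan k hK
  | succ j ih =>
    intro k hk hK
    have hrec_k := hrec k hk
    rw [aeval_seqShift_apply, sum_eq_single 0 (fun i _ hi => by rw [ih (k + i) (by omega)
      (by omega), smul_zero]) (by simp), add_zero] at hrec_k
    exact (hq.smul_eq_zero).mp hrec_k

end SeqShift

section GeometricSequences

variable {R V : Type*} [CommRing R] [AddCommGroup V] [Module R V]

def geomBinomSeq (c : R) (i : ℕ) (v : V) : ℕ → V :=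
  fun k => (c ^ k * k.choose i) • v

theorem aeval_X_sub_C_geomBinomSeq_zero (c : R) (v : V) :
    aeval (seqShift R V) (X - C c) (geomBinomSeq c 0 v) = 0 := by
  ext k : 1
  simp only [map_sub, aeval_X, aeval_C, LinearMap.sub_apply, Module.algebraMap_end_apply]
  simp [seqShift, geomBinomSeq, smul_smul, pow_succ']

theorem aeval_X_sub_C_geomBinomSeq_succ (c : R) (i : ℕ) (v : V) :
    aeval (seqShift R V) (X - C c) (geomBinomSeq c (i + 1) v) = c • geomBinomSeq c i v := by
  ext k : 1
  simp only [map_sub, aeval_X, aeval_C, LinearMap.sub_apply, Module.algebraMap_end_apply]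
  simp only [seqShift, geomBinomSeq, LinearMap.funLeft_apply, Pi.sub_apply, Pi.smul_apply,
    smul_smul, ← sub_smul, Nat.choose_succ_succ', Nat.cast_add]
  ring_nf

theorem aeval_X_sub_C_pow_geomBinomSeq (c : R) (i : ℕ) (v : V) :
    aeval (seqShift R V) ((X - C c) ^ (i + 1)) (geomBinomSeq c i v) = 0 := by
  induction i with
  | zero => simpa using aeval_X_sub_C_geomBinomSeq_zero c v
  | succ i ih =>
    rw [pow_succ, map_mul, Module.End.mul_apply, aeval_X_sub_C_geomBinomSeq_succ, map_smul, ih,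
      smul_zero]

theorem aeval_prod_X_sub_C_pow_geometric {ι : Type*} [Fintype ι] (c : ι → R) (s : ℕ)
    (v : ι → ℕ → V) :
    aeval (seqShift R V) (∏ j, (X - C (c j)) ^ s)
      (fun k => ∑ j, c j ^ k • ∑ i ∈ range s, (k.choose i : R) • v j i) = 0 := by
  have hsum : (fun k => ∑ j, c j ^ k • ∑ i ∈ range s, (k.choose i : R) • v j i)
      = ∑ j, ∑ i ∈ range s, geomBinomSeq (c j) i (v j i) := by
    ext k : 1
    simp only [Finset.sum_apply, Finset.smul_sum, smul_smul, geomBinomSeq]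
  rw [hsum, map_sum]
  refine sum_eq_zero fun j _ => ?_
  rw [map_sum]
  refine sum_eq_zero fun i hi => aeval_seqShift_eq_zero_of_dvd ?_
    (aeval_X_sub_C_pow_geomBinomSeq (c j) i (v j i))
  exact (pow_dvd_pow _ (mem_range.mp hi)).trans (dvd_prod_of_mem _ (mem_univ j))

theorem coeff_zero_prod_X_sub_C_pow_ne_zero {K ι : Type*} [Field K] [Fintype ι] {c : ι → K}
    (hc : ∀ j, c j ≠ 0) (s : ℕ) : (∏ j, (X - C (c j)) ^ s).coeff 0 ≠ 0 := by
  rw [coeff_zero_eq_eval_zero, eval_prod]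
  exact prod_ne_zero_iff.mpr fun j _ => by simp [hc j]

end GeometricSequences

namespace Matrix

variable {n : Type*} [Fintype n] [DecidableEq n]

theorem mulVecLin_pow {R : Type*} [CommRing R] (A : Matrix n n R) (k : ℕ) :
    (A ^ k).mulVecLin = A.mulVecLin ^ k :=
  map_pow (Matrix.toLinAlgEquiv' : Matrix n n R ≃ₐ[R] Module.End R (n → R)) A k

variable {F : Type*} [Field F]

theorem pow_mul_eq_zero_of_ker_pow_eq {o : Type*} [Fintype o] {A : Matrix n n F}
    {B : Matrix n o F} {m k : ℕ}
    (hm : LinearMap.ker (A ^ m).mulVecLin = LinearMap.ker (A ^ (m + 1)).mulVecLin)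
    (h : A ^ k * B = 0) : A ^ m * B = 0 := by
  rw [mulVecLin_pow, mulVecLin_pow] at hm
  set f : Module.End F (n → F) := A.mulVecLin
  have hker : LinearMap.ker (f ^ k) ≤ LinearMap.ker (f ^ m) := by
    rw [Module.End.ker_pow_constant hm k, pow_add, Module.End.mul_eq_comp]
    exact LinearMap.ker_le_ker_comp (f ^ k) (f ^ m)
  rw [ext_iff_mulVec]
  intro v
  have hv : B *ᵥ v ∈ LinearMap.ker (f ^ k) := by
    rw [LinearMap.mem_ker, ← mulVecLin_pow, mulVecLin_apply, mulVec_mulVec, h, zero_mulVec]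
  have := hker hv
  rwa [LinearMap.mem_ker, ← mulVecLin_pow, mulVecLin_apply, mulVec_mulVec, ← zero_mulVec v]
    at this

variable {A : Matrix n n F} {G : ℕ → Matrix n n F} {q : F[X]} {τ : ℕ}

theorem pow_eq_of_ker_pow_eq (hq : q.coeff 0 ≠ 0) (hG : aeval (seqShift F _) q G = 0)
    (hagree : ∀ k, τ ≤ k → A ^ k = G k) {m : ℕ}
    (hm : LinearMap.ker (A ^ m).mulVecLin = LinearMap.ker (A ^ (m + 1)).mulVecLin) :
    ∀ k, m ≤ k → A ^ k = G k := by
  have hD_eventually_zero : ∀ k, τ ≤ k → A ^ k - G k = 0 :=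
    fun k hk => sub_eq_zero.mpr (hagree k hk)
  have hD : ∀ k, aeval (seqShift F _) q (fun k => A ^ k - G k) k = A ^ k * aeval A q := by
    intro k
    rw [show (fun k => A ^ k - G k) = (A ^ ·) - G from rfl, map_sub, hG, sub_zero,
      aeval_seqShift_pow]
  have hτ : A ^ τ * aeval A q = 0 := by
    rw [← hD]; exact aeval_seqShift_apply_eq_zero hD_eventually_zero q le_rfl
  have hm_q : A ^ m * aeval A q = 0 := pow_mul_eq_zero_of_ker_pow_eq hm hτ
  have hrec : ∀ k, m ≤ k → aeval (seqShift F _) q (fun k => A ^ k - G k) k = 0 := by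
    intro k hk
    rw [hD, ← Nat.sub_add_cancel hk, pow_add, mul_assoc, hm_q, mul_zero]
  exact fun k hk => sub_eq_zero.mp (eq_zero_of_aeval_seqShift_apply_eq_zero hq.isUnit hrec
    hD_eventually_zero k hk)

theorem ker_pow_succ_le_ker_pow (hq : q.coeff 0 ≠ 0) (hG : aeval (seqShift F _) q G = 0)
    (hagree : ∀ k, τ ≤ k → A ^ k = G k) {t : ℕ} (ht : A ^ t = G t) :
    LinearMap.ker (A ^ (t + 1)).mulVecLin ≤ LinearMap.ker (A ^ t).mulVecLin := by
  intro x hx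
  rw [LinearMap.mem_ker, mulVecLin_apply] at hx ⊢
  have hrec : aeval (seqShift F _) q ((mulVecBilin F F).flip x ∘ G) = 0 := by
    rw [aeval_seqShift_comp, hG]
    ext k : 1
    simp
  have hvan : ∀ k, max τ (t + 1) ≤ k → ((mulVecBilin F F).flip x ∘ G) k = 0 := by
    intro k hk
    change G k *ᵥ x = 0
    rw [← hagree k (by omega), ← Nat.sub_add_cancel (le_of_max_le_right hk), pow_add,
      ← mulVec_mulVec, hx, mulVec_zero]
  have := eq_zero_of_aeval_seqShift_apply_eq_zero hq.isUnit (B := 0)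
    (fun k _ => congrFun hrec k) hvan t (Nat.zero_le t)
  rwa [ht]

end Matrix

theorem purely_geometric_agreement_from_index_general
    (F : Type*) [Field F] (n : Type*) [Fintype n] [DecidableEq n]
    (A : Matrix n n F) (p s τ : ℕ)
    (lam : Fin p → F) (hlam : ∀ j, lam j ≠ 0)
    (M : Fin p → ℕ → Matrix n n F)
    (G : ℕ → Matrix n n F)
    (hG : ∀ k : ℕ, G k = ∑ j : Fin p, lam j ^ k •
        ∑ i ∈ Finset.range s, (k.choose i : F) • M j i)
    (hagree : ∀ k : ℕ, τ ≤ k → A ^ k = G k)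
    (t : ℕ) (ht : A ^ t = G t) (htmin : ∀ m : ℕ, A ^ m = G m → t ≤ m) :
    (∀ k : ℕ, t ≤ k → A ^ k = G k) ∧
    (LinearMap.ker (A ^ t).mulVecLin = LinearMap.ker (A ^ (t + 1)).mulVecLin ∧
      ∀ m : ℕ,
        LinearMap.ker (A ^ m).mulVecLin = LinearMap.ker (A ^ (m + 1)).mulVecLin → t ≤ m) := by
  have hq := coeff_zero_prod_X_sub_C_pow_ne_zero hlam s
  have hGq := aeval_prod_X_sub_C_pow_geometric lam s M
  rw [← funext hG] at hGq
  have hker : LinearMap.ker (A ^ t).mulVecLin = LinearMap.ker (A ^ (t + 1)).mulVecLin := by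
    refine le_antisymm ?_ (Matrix.ker_pow_succ_le_ker_pow hq hGq hagree ht)
    rw [pow_succ', Matrix.mulVecLin_mul]
    exact LinearMap.ker_le_ker_comp _ _
  exact ⟨Matrix.pow_eq_of_ker_pow_eq hq hGq hagree hker, hker,
    fun m hm => htmin m (Matrix.pow_eq_of_ker_pow_eq hq hGq hagree hm m le_rfl)⟩

/-- If `A^k` agrees with a purely geometric sequence `G(k)` for all `k ≥ τ`, and `t` is the
least natural number with `A^t = G(t)`, then `A^k = G(k)` for all `k ≥ t`, and `t` is the
index of `A`, i.e. the least `m` with `ker(A^m) = ker(A^{m+1})`. -/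
theorem purely_geometric_agreement_from_index
    (F : Type*) [Field F] (n : Type*) [Fintype n] [DecidableEq n] [Nonempty n]
    (A : Matrix n n F) (p s τ : ℕ)
    (lam : Fin p → F) (hlam : ∀ j, lam j ≠ 0) (hinj : Function.Injective lam)
    (M : Fin p → ℕ → Matrix n n F)
    (G : ℕ → Matrix n n F)
    (hG : ∀ k : ℕ, G k = ∑ j : Fin p, lam j ^ k •
        ∑ i ∈ Finset.range s, (k.choose i : F) • M j i)
    (hagree : ∀ k : ℕ, τ ≤ k → A ^ k = G k)
    (t : ℕ) (ht : A ^ t = G t) (htmin : ∀ m : ℕ, A ^ m = G m → t ≤ m) :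
    (∀ k : ℕ, t ≤ k → A ^ k = G k) ∧
    (LinearMap.ker (A ^ t).mulVecLin = LinearMap.ker (A ^ (t + 1)).mulVecLin ∧
      ∀ m : ℕ,
        LinearMap.ker (A ^ m).mulVecLin = LinearMap.ker (A ^ (m + 1)).mulVecLin → t ≤ m) :=
  purely_geometric_agreement_from_index_general F n A p s τ lam hlam M G hG hagree t ht htmin
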